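/- Lemma 5 (second moment of the zeroth-order estimator): Let d ≥ 1, L ≥ 0, μ > 0, and let f : ℝ^d → ℝ be differentiable and L-smooth. Then for every x ∈ ℝ^d, E_u[‖g_μ(x; u)‖²] ≤ (μ²/2) L² (d + 6)³ + 2(d + 4) ‖∇f(x)‖², where the expectation is over u ~ N(0, I_d). -/

import Mathlib

open MeasureTheory ProbabilityTheory

/-- The standard Gaussian measure `N(0, I_d)` on `ℝ^d`. -/
noncomputable def stdGaussian (d : ℕ) : Measure (EuclideanSpace ℝ (Fin d)) :=
  (Measure.pi fun _ : Fin d => gaussianReal 0 1).map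
    (MeasurableEquiv.toLp 2 (Fin d → ℝ))

/-!
By the descent lemma, `c := (f (x + μ u) - f x) / μ` differs from `A := ⟪∇f x, u⟫` by at most
`L μ ‖u‖² / 2`, so `c² ≤ 2 A² + 2 (c - A)²` gives the pointwise bound
`‖g_μ(x; u)‖² ≤ 2 A² ‖u‖² + (L² μ² / 2) ‖u‖⁶`. It remains to compute two Gaussian moments:
`E ‖u‖⁶ = d (d + 2) (d + 4)` and `E[⟪g, u⟫² ‖u‖²] = (d + 2) ‖g‖²`. The first follows by induction
on `d`, splitting off one coordinate and using the one-dimensional moments `1, 1, 3, 15`. For the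
second, rotation invariance of `N(0, I_d)` reduces `g` to a multiple of the first basis vector.
-/

open Real
open scoped RealInnerProductSpace

noncomputable def zeroOrderGradientEstimator {E : Type*} [AddCommGroup E] [Module ℝ E]
    (f : E → ℝ) (μ : ℝ) (x u : E) : E :=
  ((f (x + μ • u) - f x) / μ) • u

section DescentLemma

variable {E : Type*} [NormedAddCommGroup E] [InnerProductSpace ℝ E] [CompleteSpace E]
  {f : E → ℝ} {L : ℝ}

lemma abs_sub_sub_inner_gradient_le (hf : Differentiable ℝ f)
    (hsmooth : ∀ x y, ‖gradient f x - gradient f y‖ ≤ L * ‖x - y‖) (x v : E) :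
    |f (x + v) - f x - ⟪gradient f x, v⟫| ≤ L / 2 * ‖v‖ ^ 2 := by
  set φ : ℝ → ℝ := fun t => f (x + t • v) - f x - t * ⟪gradient f x, v⟫
  have hφ (t : ℝ) : HasDerivAt φ ⟪gradient f (x + t • v) - gradient f x, v⟫ t := by
    have hline : HasDerivAt (fun t : ℝ => x + t • v) v t := by
      simpa using ((hasDerivAt_id t).smul_const v).const_add x
    have := (((hf _).hasGradientAt.hasFDerivAt.comp_hasDerivAt t hline).sub_const (f x)).sub
      ((hasDerivAt_id t).mul_const ⟪gradient f x, v⟫)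
    exact this.congr_deriv (by simp [inner_sub_left])
  have hB (t : ℝ) : HasDerivAt (fun t => L / 2 * ‖v‖ ^ 2 * t ^ 2) (L * ‖v‖ ^ 2 * t) t :=
    ((hasDerivAt_pow 2 t).const_mul (L / 2 * ‖v‖ ^ 2)).congr_deriv (by push_cast; ring)
  have hbound (t : ℝ) (ht : t ∈ Set.Ico (0 : ℝ) 1) :
      ‖⟪gradient f (x + t • v) - gradient f x, v⟫‖ ≤ L * ‖v‖ ^ 2 * t :=
    calc ‖⟪gradient f (x + t • v) - gradient f x, v⟫‖
        ≤ ‖gradient f (x + t • v) - gradient f x‖ * ‖v‖ := norm_inner_le_norm _ _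
      _ ≤ L * ‖t • v‖ * ‖v‖ := by gcongr; simpa using hsmooth (x + t • v) x
      _ = L * ‖v‖ ^ 2 * t := by rw [norm_smul, Real.norm_of_nonneg ht.1]; ring
  simpa [φ] using image_norm_le_of_norm_deriv_right_le_deriv_boundary (a := 0) (b := 1)
    (fun t _ => (hφ t).continuousAt.continuousWithinAt) (fun t _ => (hφ t).hasDerivWithinAt)
    (by simp [φ]) hB hbound (x := 1) (by simp)

lemma sq_norm_zeroOrderGradientEstimator_le {μ : ℝ} (hμ : μ ≠ 0) (hf : Differentiable ℝ f)
    (hsmooth : ∀ x y, ‖gradient f x - gradient f y‖ ≤ L * ‖x - y‖) (x u : E) :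
    ‖zeroOrderGradientEstimator f μ x u‖ ^ 2
      ≤ 2 * (⟪gradient f x, u⟫ ^ 2 * ‖u‖ ^ 2) + L ^ 2 * μ ^ 2 / 2 * (‖u‖ ^ 2) ^ 3 := by
  set A := ⟪gradient f x, u⟫
  set c := (f (x + μ • u) - f x) / μ
  have hcA : |c - A| ≤ L / 2 * |μ| * ‖u‖ ^ 2 := by
    have h := abs_sub_sub_inner_gradient_le hf hsmooth x (μ • u)
    rw [real_inner_smul_right, norm_smul, mul_pow, Real.norm_eq_abs] at h
    have hdiv : c - A = (f (x + μ • u) - f x - μ * A) / μ := by simp only [c]; field_simp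
    rw [hdiv, abs_div, div_le_iff₀ (abs_pos.2 hμ)]
    linarith
  have hc : c ^ 2 ≤ 2 * A ^ 2 + 2 * (L / 2 * |μ| * ‖u‖ ^ 2) ^ 2 := by
    have := sq_le_sq' (neg_le_of_abs_le hcA) (le_of_abs_le hcA)
    nlinarith [sq_nonneg (c - 2 * A)]
  rw [zeroOrderGradientEstimator, norm_smul, mul_pow, Real.norm_eq_abs, sq_abs]
  calc c ^ 2 * ‖u‖ ^ 2 ≤ (2 * A ^ 2 + 2 * (L / 2 * |μ| * ‖u‖ ^ 2) ^ 2) * ‖u‖ ^ 2 := by gcongr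
    _ = _ := by rw [← sq_abs μ]; ring

end DescentLemma

lemma iteratedDeriv_add_two_exp_sq_div_two_zero (n : ℕ) :
    iteratedDeriv (n + 2) (fun t : ℝ => exp (t ^ 2 / 2)) 0
      = (n + 1) * iteratedDeriv n (fun t : ℝ => exp (t ^ 2 / 2)) 0 := by
  have hderiv : deriv (fun t : ℝ => exp (t ^ 2 / 2)) = fun t => t * exp (t ^ 2 / 2) := by
    ext t
    rw [_root_.deriv_exp (by fun_prop)]
    simp [mul_comm]
  rw [iteratedDeriv_succ', hderiv, iteratedDeriv_fun_mul (by fun_prop) (by fun_prop),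
    Finset.sum_eq_single 1]
  · simp [iteratedDeriv_fun_id_zero]
  · intro i _ hi
    simp [iteratedDeriv_fun_id_zero, hi]
  · simp

lemma integral_pow_add_two_gaussianReal (n : ℕ) :
    ∫ t, t ^ (n + 2) ∂gaussianReal 0 1 = (n + 1) * ∫ t, t ^ n ∂gaussianReal 0 1 := by
  have hmoment (k : ℕ) :
      ∫ t, t ^ k ∂gaussianReal 0 1 = iteratedDeriv k (fun t : ℝ => exp (t ^ 2 / 2)) 0 := by
    have := iteratedDeriv_mgf_zero (X := fun t => t) (μ := gaussianReal 0 1) (by simp) k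
    rw [mgf_fun_id_gaussianReal] at this
    simpa using this.symm
  rw [hmoment, hmoment, iteratedDeriv_add_two_exp_sq_div_two_zero]

lemma ProbabilityTheory.IsGaussian.integrable_of_norm_le_mul_norm_pow {E : Type*}
    [NormedAddCommGroup E] [NormedSpace ℝ E] [MeasurableSpace E] [BorelSpace E] [CompleteSpace E]
    [SecondCountableTopology E] (μ : Measure E) [IsGaussian μ] {F : E → ℝ}
    (hF : AEStronglyMeasurable F μ) (C : ℝ) (n : ℕ) (hle : ∀ u, ‖F u‖ ≤ C * ‖u‖ ^ n) :
    Integrable F μ :=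
  (((IsGaussian.memLp_id μ n (by simp)).integrable_norm_pow').const_mul C).mono' hF
    (ae_of_all _ hle)

lemma integrable_pow_gaussianReal (m : ℝ) (v : NNReal) (n : ℕ) :
    Integrable (fun t : ℝ => t ^ n) (gaussianReal m v) :=
  IsGaussian.integrable_of_norm_le_mul_norm_pow _ (by fun_prop) 1 n (by simp)

section StdGaussian

variable {E : Type*} [NormedAddCommGroup E] [InnerProductSpace ℝ E] [FiniteDimensional ℝ E]
  [MeasurableSpace E] [BorelSpace E]

lemma integrable_inner_pow_mul_norm_sq_pow_stdGaussian (g : E) (a k : ℕ) :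
    Integrable (fun u => ⟪g, u⟫ ^ a * (‖u‖ ^ 2) ^ k) (ProbabilityTheory.stdGaussian E) := by
  refine IsGaussian.integrable_of_norm_le_mul_norm_pow _ (by fun_prop) (‖g‖ ^ a) (a + 2 * k)
    fun u => ?_
  rw [norm_mul, norm_pow, norm_pow, norm_pow, norm_norm, pow_add, pow_mul, ← mul_assoc, ← mul_pow]
  gcongr
  exact norm_inner_le_norm g u

lemma integral_comp_linearIsometryEquiv_stdGaussian (R : E ≃ₗᵢ[ℝ] E) (F : E → ℝ) :
    ∫ u, F (R u) ∂ProbabilityTheory.stdGaussian E = ∫ u, F u ∂ProbabilityTheory.stdGaussian E := by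
  conv_rhs => rw [← stdGaussian_map R]
  exact (integral_map_equiv R.toHomeomorph.toMeasurableEquiv F).symm

lemma integral_inner_sq_mul_norm_sq_stdGaussian_eq {e : E} (he : ‖e‖ = 1) (g : E) :
    ∫ u, ⟪g, u⟫ ^ 2 * ‖u‖ ^ 2 ∂ProbabilityTheory.stdGaussian E
      = ‖g‖ ^ 2 * ∫ u, ⟪e, u⟫ ^ 2 * ‖u‖ ^ 2 ∂ProbabilityTheory.stdGaussian E := by
  have hnorm : ‖g‖ = ‖‖g‖ • e‖ := by simp [norm_smul, he]
  set R := Submodule.reflection (ℝ ∙ (g - ‖g‖ • e))ᗮ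
  have hR : R g = ‖g‖ • e := Submodule.reflection_sub hnorm
  rw [← integral_comp_linearIsometryEquiv_stdGaussian R (fun u => ⟪e, u⟫ ^ 2 * ‖u‖ ^ 2),
    ← integral_const_mul]
  congr 1 with u
  rw [← R.inner_map_map g u, hR, R.norm_map, real_inner_smul_left]
  ring

end StdGaussian

namespace EuclideanSpace

noncomputable def consMeasurableEquiv (d : ℕ) :
    ℝ × EuclideanSpace ℝ (Fin d) ≃ᵐ EuclideanSpace ℝ (Fin (d + 1)) :=
  ((MeasurableEquiv.refl ℝ).prodCongr (MeasurableEquiv.toLp 2 _).symm).trans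
    ((MeasurableEquiv.piFinSuccAbove (fun _ => ℝ) 0).symm.trans (MeasurableEquiv.toLp 2 _))

lemma consMeasurableEquiv_apply (d : ℕ) (t : ℝ) (v : EuclideanSpace ℝ (Fin d)) :
    consMeasurableEquiv d (t, v) = WithLp.toLp 2 (Fin.cons t v.ofLp) := by
  simp only [consMeasurableEquiv, MeasurableEquiv.trans_apply,
    MeasurableEquiv.piFinSuccAbove_symm_apply, Fin.insertNthEquiv_zero, MeasurableEquiv.toLp_apply]
  rfl

lemma inner_consMeasurableEquiv (d : ℕ) (s t : ℝ) (w v : EuclideanSpace ℝ (Fin d)) :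
    ⟪consMeasurableEquiv d (s, w), consMeasurableEquiv d (t, v)⟫ = s * t + ⟪w, v⟫ := by
  simp [consMeasurableEquiv_apply, PiLp.inner_apply, Fin.sum_univ_succ, mul_comm]

lemma norm_sq_consMeasurableEquiv (d : ℕ) (t : ℝ) (v : EuclideanSpace ℝ (Fin d)) :
    ‖consMeasurableEquiv d (t, v)‖ ^ 2 = t ^ 2 + ‖v‖ ^ 2 := by
  simp only [← real_inner_self_eq_norm_sq, inner_consMeasurableEquiv]
  ring

lemma measurePreserving_consMeasurableEquiv (d : ℕ) :
    MeasurePreserving (consMeasurableEquiv d)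
      ((gaussianReal 0 1).prod (ProbabilityTheory.stdGaussian (EuclideanSpace ℝ (Fin d))))
      (ProbabilityTheory.stdGaussian (EuclideanSpace ℝ (Fin (d + 1)))) := by
  rw [← map_pi_eq_stdGaussian, ← map_pi_eq_stdGaussian]
  have htoLp (n : ℕ) : MeasurePreserving (MeasurableEquiv.toLp 2 (Fin n → ℝ))
      (Measure.pi fun _ => gaussianReal 0 1)
      ((Measure.pi fun _ => gaussianReal 0 1).map (WithLp.toLp 2)) :=
    (MeasurableEquiv.toLp 2 _).measurable.measurePreserving _
  exact (htoLp (d + 1)).comp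
    ((measurePreserving_piFinSuccAbove (fun _ => gaussianReal 0 1) 0).symm.comp
      ((MeasurePreserving.id _).prod ((htoLp d).symm)))

end EuclideanSpace

open EuclideanSpace

lemma integral_norm_sq_pow_stdGaussian_succ (d k : ℕ) :
    ∫ u, (‖u‖ ^ 2) ^ k ∂ProbabilityTheory.stdGaussian (EuclideanSpace ℝ (Fin (d + 1))) =
      ∑ j ∈ Finset.range (k + 1), (∫ t, t ^ (2 * j) ∂gaussianReal 0 1) *
        ∫ v, k.choose j * (‖v‖ ^ 2) ^ (k - j)
          ∂ProbabilityTheory.stdGaussian (EuclideanSpace ℝ (Fin d)) := by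
  have hexpand (z : ℝ × EuclideanSpace ℝ (Fin d)) : (‖consMeasurableEquiv d z‖ ^ 2) ^ k =
      ∑ j ∈ Finset.range (k + 1), z.1 ^ (2 * j) * (k.choose j * (‖z.2‖ ^ 2) ^ (k - j)) := by
    rw [norm_sq_consMeasurableEquiv, add_pow]
    exact Finset.sum_congr rfl fun j _ => by ring
  have hint (j : ℕ) : Integrable (fun v : EuclideanSpace ℝ (Fin d) => (‖v‖ ^ 2) ^ (k - j))
      (ProbabilityTheory.stdGaussian _) := by
    simpa using integrable_inner_pow_mul_norm_sq_pow_stdGaussian 0 0 (k - j)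
  rw [← (measurePreserving_consMeasurableEquiv d).integral_comp', integral_congr_ae
    (ae_of_all _ hexpand), integral_finsetSum _ fun j _ =>
      (integrable_pow_gaussianReal 0 1 (2 * j)).mul_prod ((hint j).const_mul _)]
  exact Finset.sum_congr rfl fun j _ => integral_prod_mul (μ := gaussianReal 0 1)
    (ν := ProbabilityTheory.stdGaussian (EuclideanSpace ℝ (Fin d))) (fun t => t ^ (2 * j))
    (fun v => (k.choose j : ℝ) * (‖v‖ ^ 2) ^ (k - j))

lemma integral_norm_sq_stdGaussian (d : ℕ) :
    ∫ u, ‖u‖ ^ 2 ∂ProbabilityTheory.stdGaussian (EuclideanSpace ℝ (Fin d)) = d := by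
  induction d with
  | zero => simp [EuclideanSpace.norm_eq]
  | succ d ih =>
    simpa [Finset.sum_range_succ, ih, integral_pow_add_two_gaussianReal] using
      integral_norm_sq_pow_stdGaussian_succ d 1

lemma integral_norm_sq_sq_stdGaussian (d : ℕ) :
    ∫ u, (‖u‖ ^ 2) ^ 2 ∂ProbabilityTheory.stdGaussian (EuclideanSpace ℝ (Fin d))
      = d * (d + 2) := by
  induction d with
  | zero => simp [EuclideanSpace.norm_eq]
  | succ d ih =>
    rw [integral_norm_sq_pow_stdGaussian_succ]
    simp only [Nat.reduceAdd, integral_const_mul, Finset.sum_range_succ, Finset.range_one,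
      Finset.sum_singleton, mul_zero, pow_zero, integral_const, probReal_univ, smul_eq_mul, mul_one,
      Nat.choose_zero_right, Nat.cast_one, tsub_zero, ih, one_mul,
      integral_pow_add_two_gaussianReal, CharP.cast_eq_zero, zero_add, Nat.choose_succ_self_right,
      Nat.cast_ofNat, Nat.add_one_sub_one, pow_one, integral_norm_sq_stdGaussian, Nat.reduceMul,
      Nat.choose_self, tsub_self, Nat.cast_add]
    ring

lemma integral_norm_sq_cube_stdGaussian (d : ℕ) :
    ∫ u, (‖u‖ ^ 2) ^ 3 ∂ProbabilityTheory.stdGaussian (EuclideanSpace ℝ (Fin d))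
      = d * (d + 2) * (d + 4) := by
  induction d with
  | zero => simp [EuclideanSpace.norm_eq]
  | succ d ih =>
    rw [integral_norm_sq_pow_stdGaussian_succ]
    simp only [Nat.reduceAdd, integral_const_mul, Finset.sum_range_succ, Finset.range_one,
      Finset.sum_singleton, mul_zero, pow_zero, integral_const, probReal_univ, smul_eq_mul, mul_one,
      Nat.choose_zero_right, Nat.cast_one, tsub_zero, ih, one_mul,
      integral_pow_add_two_gaussianReal, CharP.cast_eq_zero, zero_add, Nat.choose_one_right,
      Nat.cast_ofNat, Nat.add_one_sub_one, integral_norm_sq_sq_stdGaussian, Nat.reduceMul,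
      Nat.choose_succ_self_right, Nat.reduceSub, pow_one, integral_norm_sq_stdGaussian,
      Nat.choose_self, tsub_self, Nat.cast_add]
    ring

lemma integral_inner_sq_mul_norm_sq_stdGaussian (d : ℕ) (g : EuclideanSpace ℝ (Fin d)) :
    ∫ u, ⟪g, u⟫ ^ 2 * ‖u‖ ^ 2 ∂ProbabilityTheory.stdGaussian (EuclideanSpace ℝ (Fin d))
      = (d + 2) * ‖g‖ ^ 2 := by
  cases d with
  | zero => simp [Subsingleton.elim g 0]
  | succ d =>
    set e := consMeasurableEquiv d (1, 0) with he_def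
    have he : ‖e‖ = 1 := by
      rw [← sq_eq_sq₀ (norm_nonneg e) zero_le_one, he_def, norm_sq_consMeasurableEquiv]
      simp
    have hsplit (z : ℝ × EuclideanSpace ℝ (Fin d)) :
        ⟪e, consMeasurableEquiv d z⟫ ^ 2 * ‖consMeasurableEquiv d z‖ ^ 2
          = z.1 ^ 4 + z.1 ^ 2 * ‖z.2‖ ^ 2 := by
      rw [he_def, inner_consMeasurableEquiv, norm_sq_consMeasurableEquiv, one_mul,
        inner_zero_left, add_zero]
      ring
    have hnorm_sq : Integrable (fun v : EuclideanSpace ℝ (Fin d) => ‖v‖ ^ 2)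
        (ProbabilityTheory.stdGaussian _) := by
      simpa using integrable_inner_pow_mul_norm_sq_pow_stdGaussian 0 0 1
    rw [integral_inner_sq_mul_norm_sq_stdGaussian_eq he,
      ← (measurePreserving_consMeasurableEquiv d).integral_comp', integral_congr_ae
      (ae_of_all _ hsplit), integral_add ((integrable_pow_gaussianReal 0 1 4).comp_fst _)
      ((integrable_pow_gaussianReal 0 1 2).mul_prod hnorm_sq),
      integral_fun_fst (fun t : ℝ => t ^ 4),
      integral_prod_mul (μ := gaussianReal 0 1) (fun t => t ^ 2) (fun v => ‖v‖ ^ 2)]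
    simp only [probReal_univ, integral_pow_add_two_gaussianReal, Nat.cast_ofNat,
      CharP.cast_eq_zero, zero_add, pow_zero, integral_const, smul_eq_mul, mul_one, one_mul,
      integral_norm_sq_stdGaussian, Nat.cast_add, Nat.cast_one]
    ring

lemma stdGaussian_eq_stdGaussian_euclideanSpace (d : ℕ) :
    _root_.stdGaussian d = ProbabilityTheory.stdGaussian (EuclideanSpace ℝ (Fin d)) :=
  map_pi_eq_stdGaussian

theorem zo_estimator_second_moment_general
    (d : ℕ) (L μ : ℝ) (hμ : 0 < μ)
    (f : EuclideanSpace ℝ (Fin d) → ℝ)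
    (hf : Differentiable ℝ f)
    (hsmooth : ∀ x y, ‖gradient f x - gradient f y‖ ≤ L * ‖x - y‖)
    (x : EuclideanSpace ℝ (Fin d)) :
    ∫ u, ‖((f (x + μ • u) - f x) / μ) • u‖ ^ 2 ∂stdGaussian d
      ≤ μ ^ 2 / 2 * L ^ 2 * ((d : ℝ) + 6) ^ 3 + 2 * ((d : ℝ) + 4) * ‖gradient f x‖ ^ 2 := by
  rw [stdGaussian_eq_stdGaussian_euclideanSpace]
  set G := gradient f x
  have hinner : Integrable (fun u => 2 * (⟪G, u⟫ ^ 2 * ‖u‖ ^ 2))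
      (ProbabilityTheory.stdGaussian (EuclideanSpace ℝ (Fin d))) := by
    simpa using (integrable_inner_pow_mul_norm_sq_pow_stdGaussian G 2 1).const_mul 2
  have hnorm : Integrable (fun u => L ^ 2 * μ ^ 2 / 2 * (‖u‖ ^ 2) ^ 3)
      (ProbabilityTheory.stdGaussian (EuclideanSpace ℝ (Fin d))) := by
    simpa using (integrable_inner_pow_mul_norm_sq_pow_stdGaussian G 0 3).const_mul _
  have hcube : (d : ℝ) * (d + 2) * (d + 4) ≤ (d + 6) ^ 3 := by nlinarith [d.cast_nonneg (α := ℝ)]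
  calc _ ≤ ∫ u, 2 * (⟪G, u⟫ ^ 2 * ‖u‖ ^ 2) + L ^ 2 * μ ^ 2 / 2 * (‖u‖ ^ 2) ^ 3
          ∂ProbabilityTheory.stdGaussian (EuclideanSpace ℝ (Fin d)) :=
        integral_mono_of_nonneg (ae_of_all _ fun u => by positivity) (hinner.add hnorm)
          (ae_of_all _ (sq_norm_zeroOrderGradientEstimator_le hμ.ne' hf hsmooth x))
    _ = 2 * ((d + 2) * ‖G‖ ^ 2) + L ^ 2 * μ ^ 2 / 2 * (d * (d + 2) * (d + 4)) := by
        rw [integral_add hinner hnorm, integral_const_mul, integral_const_mul,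
          integral_inner_sq_mul_norm_sq_stdGaussian, integral_norm_sq_cube_stdGaussian]
    _ ≤ _ := by
        nlinarith [mul_le_mul_of_nonneg_left hcube (by positivity : 0 ≤ L ^ 2 * μ ^ 2 / 2),
          sq_nonneg ‖G‖]

/-- Lemma 5: the second moment of the zeroth-order estimator
`g_μ(x; u) = ((f(x + μu) - f(x))/μ) u`, with `u ~ N(0, I_d)`, satisfies
`E_u[‖g_μ(x; u)‖²] ≤ (μ²/2) L² (d+6)³ + 2(d+4)‖∇f(x)‖²`. -/
theorem zo_estimator_second_moment
    (d : ℕ) (hd : 1 ≤ d) (L μ : ℝ) (hL : 0 ≤ L) (hμ : 0 < μ)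
    (f : EuclideanSpace ℝ (Fin d) → ℝ)
    (hf : Differentiable ℝ f)
    (hsmooth : ∀ x y, ‖gradient f x - gradient f y‖ ≤ L * ‖x - y‖)
    (x : EuclideanSpace ℝ (Fin d)) :
    ∫ u, ‖((f (x + μ • u) - f x) / μ) • u‖ ^ 2 ∂stdGaussian d
      ≤ μ ^ 2 / 2 * L ^ 2 * ((d : ℝ) + 6) ^ 3 + 2 * ((d : ℝ) + 4) * ‖gradient f x‖ ^ 2 :=
  zo_estimator_second_moment_general d L μ hμ f hf hsmooth x
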